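/- (Limiting vector is an equilibrium.) Suppose a trajectory x(t+1) = A(x(t))x(t) of an SBC or SBI system converges to x_∞, and min_i ε_i(x_∞) > 0 where ε is the equi-topology distance. Then there exists T such that for all t ≥ T, G_r(x(t)) = G_r(x_∞), and x_∞ is an equilibrium opinion vector: A(x_∞)x_∞ = x_∞. -/

import Mathlib

/-!
Once `x t` lies within `ε_i(x∞)` of `x∞` in every coordinate, each pairwise distance
`|x t i - x t j|` is within `ε_i + ε_j` of `|x∞ i - x∞ j|`, which is at least that far from the
threshold `B i j ∈ {r i, r j}`; so the proximity graph, hence the averaging matrix, stays equal to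
that of `x∞`. From then on the trajectory is driven by one fixed continuous linear map, and its
limit is a fixed point of that map.
-/

open Filter Matrix Finset

/-- Averaging adjacency matrix of the proximity digraph with bound function `B`
(`B i j = r i` for SBC, `B i j = r j` for SBI). -/
noncomputable def adjMat {n : ℕ} (B : Fin n → Fin n → ℝ) (y : Fin n → ℝ) :
    Matrix (Fin n) (Fin n) ℝ :=
  Matrix.of fun i j =>
    if |y i - y j| ≤ B i j
    then ((Finset.univ.filter (fun k => |y i - y k| ≤ B i k)).card : ℝ)⁻¹
    else 0

/-- Equi-topology distance `ε`. -/
noncomputable def epsDist {n : ℕ} (r z : Fin n → ℝ) (i : Fin n) : ℝ :=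
  (1 / 2) * sInf {d : ℝ | ∃ j, j ≠ i ∧
    (d = |(|z i - z j| - r i)| ∨ d = |(|z i - z j| - r j)|)}

open Topology

theorem Filter.Tendsto.isFixedPt_of_eventually_succ {X : Type*} [TopologicalSpace X] [T2Space X]
    {f : X → X} {x : ℕ → X} {L : X} (hx : Tendsto x atTop (𝓝 L)) (hf : ContinuousAt f L)
    (hstep : ∀ᶠ t in atTop, x (t + 1) = f (x t)) : Function.IsFixedPt f L := by
  have hshift : Tendsto (fun t => x (t + 1)) atTop (𝓝 L) := hx.comp (tendsto_add_atTop_nat 1)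
  exact tendsto_nhds_unique ((hf.tendsto.comp hx).congr' (hstep.mono fun _ h => h.symm)) hshift

theorem le_iff_le_of_abs_sub_lt {a b c δ : ℝ} (hab : |a - b| < δ) (hbc : δ ≤ |b - c|) :
    a ≤ c ↔ b ≤ c := by
  rcases abs_sub_lt_iff.1 hab with ⟨h₁, h₂⟩
  rcases abs_cases (b - c) with ⟨h, _⟩ | ⟨h, _⟩ <;> constructor <;> intro <;> linarith

theorem abs_abs_sub_abs_sub_le {α : Type*} [AddCommGroup α] [LinearOrder α] [IsOrderedAddMonoid α]
    (a b c d : α) : |(|a - b| - |c - d|)| ≤ |a - c| + |b - d| :=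
  calc |(|a - b| - |c - d|)| ≤ |(a - b) - (c - d)| := abs_abs_sub_abs_le_abs_sub _ _
    _ = |(a - c) - (b - d)| := by abel_nf
    _ ≤ |a - c| + |b - d| := abs_sub _ _

section EquiTopology

variable {n : ℕ} {r z : Fin n → ℝ}

theorem two_mul_epsDist_le {i j : Fin n} (hji : j ≠ i) {R : ℝ} (hR : R = r i ∨ R = r j) :
    2 * epsDist r z i ≤ |(|z i - z j| - R)| := by
  have hbdd : BddBelow {d : ℝ | ∃ j, j ≠ i ∧
      (d = |(|z i - z j| - r i)| ∨ d = |(|z i - z j| - r j)|)} :=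
    ⟨0, by rintro d ⟨j, -, rfl | rfl⟩ <;> exact abs_nonneg _⟩
  have hle := csInf_le hbdd (a := |(|z i - z j| - R)|)
    ⟨j, hji, by rcases hR with rfl | rfl; exacts [.inl rfl, .inr rfl]⟩
  unfold epsDist
  linarith

theorem epsDist_add_epsDist_le {i j : Fin n} (hij : i ≠ j) {R : ℝ} (hR : R = r i ∨ R = r j) :
    epsDist r z i + epsDist r z j ≤ |(|z i - z j| - R)| := by
  have hi := two_mul_epsDist_le (z := z) hij.symm hR
  have hj := two_mul_epsDist_le (z := z) hij hR.symm
  rw [abs_sub_comm (z j)] at hj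
  linarith

theorem abs_sub_le_iff_of_dist_lt_epsDist {B : Fin n → Fin n → ℝ}
    (hB : ∀ i j, B i j = r i ∨ B i j = r j) {y : Fin n → ℝ}
    (hyz : ∀ i, dist (y i) (z i) < epsDist r z i) (i j : Fin n) :
    |y i - y j| ≤ B i j ↔ |z i - z j| ≤ B i j := by
  rcases eq_or_ne i j with rfl | hij
  · simp
  simp only [Real.dist_eq] at hyz
  refine le_iff_le_of_abs_sub_lt ?_ (epsDist_add_epsDist_le hij (hB i j))
  linarith [abs_abs_sub_abs_sub_le (y i) (y j) (z i) (z j), hyz i, hyz j]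

end EquiTopology

theorem adjMat_congr {n : ℕ} {B : Fin n → Fin n → ℝ} {y z : Fin n → ℝ}
    (h : ∀ i j, |y i - y j| ≤ B i j ↔ |z i - z j| ≤ B i j) : adjMat B y = adjMat B z := by
  ext i j
  simp only [adjMat, Matrix.of_apply, h]

theorem stmt11_general {n : ℕ} (r : Fin n → ℝ) (B : Fin n → Fin n → ℝ)
    (hB : (∀ i j, B i j = r i) ∨ (∀ i j, B i j = r j))
    (x : ℕ → Fin n → ℝ)
    (hstep : ∀ t, x (t + 1) = adjMat B (x t) *ᵥ x t)
    (xinf : Fin n → ℝ)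
    (hconv : ∀ i, Tendsto (fun t => x t i) atTop (nhds (xinf i)))
    (hε : ∀ i, 0 < epsDist r xinf i) :
    (∃ T : ℕ, ∀ t ≥ T, ∀ i j,
        (|x t i - x t j| ≤ B i j) ↔ (|xinf i - xinf j| ≤ B i j)) ∧
    adjMat B xinf *ᵥ xinf = xinf := by
  have hB' : ∀ i j, B i j = r i ∨ B i j = r j :=
    hB.elim (fun h i j => .inl (h i j)) (fun h i j => .inr (h i j))
  have hclose : ∀ᶠ t in atTop, ∀ i, dist (x t i) (xinf i) < epsDist r xinf i :=
    eventually_all.2 fun i => Metric.tendsto_nhds.1 (hconv i) _ (hε i)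
  have hsame : ∀ᶠ t in atTop, ∀ i j, |x t i - x t j| ≤ B i j ↔ |xinf i - xinf j| ≤ B i j :=
    hclose.mono fun _ ht => abs_sub_le_iff_of_dist_lt_epsDist hB' ht
  refine ⟨eventually_atTop.1 hsame, ?_⟩
  refine (tendsto_pi_nhds.2 hconv).isFixedPt_of_eventually_succ (by fun_prop) ?_
  filter_upwards [hsame] with t ht
  rw [hstep t, adjMat_congr ht]

/-- Limiting vector is an equilibrium: if a trajectory of an SBC or
SBI system converges to `x∞` with `min_i ε i (x∞) > 0`, then eventually
`G_r(x t) = G_r(x∞)`, and `x∞` is an equilibrium: `A(x∞) x∞ = x∞`. -/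
theorem stmt11 {n : ℕ} (r : Fin n → ℝ) (B : Fin n → Fin n → ℝ)
    (hr : ∀ i, 0 < r i)
    (hB : (∀ i j, B i j = r i) ∨ (∀ i j, B i j = r j))
    (x : ℕ → Fin n → ℝ)
    (hstep : ∀ t, x (t + 1) = adjMat B (x t) *ᵥ x t)
    (xinf : Fin n → ℝ)
    (hconv : ∀ i, Tendsto (fun t => x t i) atTop (nhds (xinf i)))
    (hε : ∀ i, 0 < epsDist r xinf i) :
    (∃ T : ℕ, ∀ t ≥ T, ∀ i j,
        (|x t i - x t j| ≤ B i j) ↔ (|xinf i - xinf j| ≤ B i j)) ∧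
    adjMat B xinf *ᵥ xinf = xinf :=
  stmt11_general r B hB x hstep xinf hconv hε
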